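/- For every modal formula A, the sequent □(□(A → □A) → A) ⇒ A is provable in Grz_∞. -/

import Mathlib

/-- Modal formulas built from ⊥ and propositional variables using → and □. -/
inductive Fml : Type
  | bot : Fml
  | var : ℕ → Fml
  | imp : Fml → Fml → Fml
  | box : Fml → Fml
deriving DecidableEq

/-- A sequent `Γ ⇒ Δ`: a pair of finite multisets of formulas. -/
abbrev Sequent : Type := Multiset Fml × Multiset Fml

/-- Tags for the inference rules of `Grz_∞ (+ cut)`. -/
inductive RuleTag : Type
  | ax | axBot | impL | impR | refl | box | cut
deriving DecidableEq

/-- Local correctness of a rule application in `Grz_∞` (cut allowed when the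
Boolean parameter is `true`): it relates the conclusion sequent, the rule tag
and the (optional) first and second premises.  For the rule `(□)`, the second
premise is its right premise. -/
inductive Rules : Bool → Sequent → RuleTag → Option Sequent → Option Sequent → Prop
  | ax (c : Bool) (Γ Δ : Multiset Fml) (p : ℕ) :
      Rules c (Fml.var p ::ₘ Γ, Fml.var p ::ₘ Δ) RuleTag.ax none none
  | axBot (c : Bool) (Γ Δ : Multiset Fml) :
      Rules c (Fml.bot ::ₘ Γ, Δ) RuleTag.axBot none none
  | impL (c : Bool) (Γ Δ : Multiset Fml) (A B : Fml) :
      Rules c (Fml.imp A B ::ₘ Γ, Δ) RuleTag.impL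
        (some (B ::ₘ Γ, Δ)) (some (Γ, A ::ₘ Δ))
  | impR (c : Bool) (Γ Δ : Multiset Fml) (A B : Fml) :
      Rules c (Γ, Fml.imp A B ::ₘ Δ) RuleTag.impR
        (some (A ::ₘ Γ, B ::ₘ Δ)) none
  | refl (c : Bool) (Γ Δ : Multiset Fml) (B : Fml) :
      Rules c (Fml.box B ::ₘ Γ, Δ) RuleTag.refl
        (some (B ::ₘ Fml.box B ::ₘ Γ, Δ)) none
  | box (c : Bool) (Γ Φ Δ : Multiset Fml) (A : Fml) :
      Rules c (Γ + Φ.map Fml.box, Fml.box A ::ₘ Δ) RuleTag.box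
        (some (Γ + Φ.map Fml.box, A ::ₘ Δ)) (some (Φ.map Fml.box, ({A} : Multiset Fml)))
  | cut (Γ Δ : Multiset Fml) (A : Fml) :
      Rules true (Γ, Δ) RuleTag.cut (some (Γ, A ::ₘ Δ)) (some (A ::ₘ Γ, Δ))

/-- An ∞-proof in `Grz_∞` (`c = false`) or `Grz_∞ + cut` (`c = true`): a
possibly infinite tree (nodes are adressed by lists of Booleans, `false`
pointing to the first premise and `true` to the second premise) of sequents
together with applied rules, constructed according to the rules, whose leaves
are initial sequents, and in which every infinite branch passes through a
right premise of the rule `(□)` infinitely many times. -/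
structure InfProof (c : Bool) : Type where
  node : List Bool → Option (Sequent × RuleTag)
  root_isSome : (node []).isSome
  closed : ∀ (p : List Bool) (i : Bool), node p = none → node (p ++ [i]) = none
  correct : ∀ (p : List Bool) (s : Sequent) (r : RuleTag), node p = some (s, r) →
    Rules c s r ((node (p ++ [false])).map Prod.fst) ((node (p ++ [true])).map Prod.fst)
  guard : ∀ f : ℕ → Bool, (∀ n : ℕ, (node ((List.range n).map f)).isSome) →
    ∀ N : ℕ, ∃ n : ℕ, N ≤ n ∧ f n = true ∧
      (node ((List.range n).map f)).map Prod.snd = some RuleTag.box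

/-- The sequent at the root of an ∞-proof. -/
def rootSeq {c : Bool} (π : InfProof c) : Sequent :=
  ((π.node []).getD (((0 : Multiset Fml), (0 : Multiset Fml)), RuleTag.ax)).1

/-- A sequent is provable in `Grz_∞ (+ cut)` if it has an ∞-proof with that
sequent at the root. -/
def ProvableInf (c : Bool) (s : Sequent) : Prop := ∃ π : InfProof c, rootSeq π = s

/-- The number of right premises of the rule `(□)` strictly below the node
addressed by `p` in the ∞-proof `π`. -/
def countBR {c : Bool} (π : InfProof c) (p : List Bool) : ℕ :=
  ((List.range p.length).filter fun i =>
    p.getD i false && decide ((π.node (p.take i)).map Prod.snd = some RuleTag.box)).length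

/-- `Frag n π τ` means that the `n`-fragments of `π` and `τ` coincide
(`π ∼_n τ`): the trees agree on every node lying strictly before the `n`-th
right premise of `(□)` on its branch. -/
def Frag {c : Bool} (n : ℕ) (π τ : InfProof c) : Prop :=
  ∀ p : List Bool, countBR π p < n → π.node p = τ.node p

/-- The local pheight `|π|`: the length of the longest branch in the main
(1-)fragment of `π`. -/
noncomputable def pheight {c : Bool} (π : InfProof c) : ℕ :=
  sSup { n : ℕ | ∃ p : List Bool, p.length = n ∧ (π.node p).isSome ∧ countBR π p = 0 }

/-- Membership in `P_n`: the ∞-proof contains no applications of the cut rule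
in its `n`-fragment. -/
def CutFreeIn {c : Bool} (n : ℕ) (π : InfProof c) : Prop :=
  ∀ p : List Bool, countBR π p < n → (π.node p).map Prod.snd ≠ some RuleTag.cut

/-- A non-expansive mapping on ∞-proofs. -/
def NonExp {c : Bool} (u : InfProof c → InfProof c) : Prop :=
  ∀ (n : ℕ) (π π' : InfProof c), Frag n π π' → Frag n (u π) (u π')

/-- An adequate mapping on ∞-proofs: it preserves each `P_n`. -/
def Adequate {c : Bool} (u : InfProof c → InfProof c) : Prop :=
  ∀ (n : ℕ) (π : InfProof c), CutFreeIn n π → CutFreeIn n (u π)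

/-!
Write `H` for `□(□(A → □A) → A)`. The ∞-proof of `H ⇒ A` is cyclic. (refl) and (→L) reduce
`H ⇒ A` to the identity `A, H ⇒ A` and to `H ⇒ □(A → □A), A`. By (→R), both premises of (□)
on this sequent become `A, H ⇒ □A, Δ`, and (□) on `□A` leaves an identity and, as its right
premise, `H ⇒ A` again. So the only infinite branches run through this cycle, each time through
right premises of (□); all other branches end inside finite proofs of identities. Formally the
tree is the unfolding of a graph of states, and the guard condition holds because the steps that
are not right premises of (□) are well-founded on the states.
-/

namespace InfProof

variable {c : Bool} {S : Type*} (label : S → Sequent × RuleTag) (next : S → Bool → Option S)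

def reach (s : S) (p : List Bool) : Option S :=
  p.foldl (fun o i => o.bind (next · i)) (some s)

theorem reach_concat (s : S) (p : List Bool) (i : Bool) :
    reach next s (p ++ [i]) = (reach next s p).bind (next · i) :=
  List.foldl_concat _ _ _ _

/-- A step that stays within a fragment: to any premise except the right premise of (□). -/
def FragmentStep (t s : S) : Prop :=
  ∃ i, next s i = some t ∧ ¬((label s).2 = RuleTag.box ∧ i = true)

variable {label next} in
theorem exists_boxRight_of_wellFounded (hwf : WellFounded (FragmentStep label next)) (s₀ : S)
    (f : ℕ → Bool) (hf : ∀ n, (reach next s₀ ((List.range n).map f)).isSome) (s : S) :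
    ∀ N, reach next s₀ ((List.range N).map f) = some s →
      ∃ n, N ≤ n ∧ f n = true ∧
        ((reach next s₀ ((List.range n).map f)).map label).map Prod.snd = some RuleTag.box := by
  induction s using hwf.induction with
  | _ s ih =>
    intro N hs
    by_cases hbox : (label s).2 = RuleTag.box ∧ f N = true
    · exact ⟨N, le_rfl, hbox.2, by simp [hs, hbox.1]⟩
    · obtain ⟨t, ht⟩ := Option.isSome_iff_exists.mp (hf (N + 1))
      have hstep : next s (f N) = some t := by
        rwa [List.range_succ, List.map_append, List.map_singleton, reach_concat, hs] at ht
      obtain ⟨n, hn, hfn, hn'⟩ := ih t ⟨f N, hstep, hbox⟩ (N + 1) ht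
      exact ⟨n, by omega, hfn, hn'⟩

def LocallyCorrect (c : Bool) : Prop :=
  ∀ s, Rules c (label s).1 (label s).2
    ((next s false).map (Prod.fst ∘ label)) ((next s true).map (Prod.fst ∘ label))

/-- The ∞-proof presented by a graph of states: the node at address `p` is the label of the
state reached along `p`. -/
def unfold (s₀ : S) (hrules : LocallyCorrect label next c)
    (hwf : WellFounded (FragmentStep label next)) : InfProof c where
  node p := (reach next s₀ p).map label
  root_isSome := rfl
  closed p i h := by
    rw [Option.map_eq_none_iff] at h
    simp [reach_concat, h]
  correct p s r h := by
    obtain ⟨t, ht, hlabel⟩ := Option.map_eq_some_iff.mp h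
    simpa [reach_concat, ht, hlabel, Option.map_map] using hrules t
  guard f hf N := by
    have hreach n : (reach next s₀ ((List.range n).map f)).isSome := by simpa using hf n
    obtain ⟨s, hs⟩ := Option.isSome_iff_exists.mp (hreach N)
    exact exists_boxRight_of_wellFounded hwf s₀ f hreach s N hs

end InfProof

prefix:max "□" => Fml.box
infixr:25 " ➝ " => Fml.imp

theorem Rules.box_cons (c : Bool) (Γ Δ : Multiset Fml) (B A : Fml) :
    Rules c (□B ::ₘ Γ, □A ::ₘ Δ) RuleTag.box (some (□B ::ₘ Γ, A ::ₘ Δ)) (some ({□B}, {A})) := by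
  simpa [Multiset.add_cons, ← Multiset.singleton_add, add_comm] using Rules.box c Γ {B} Δ A

inductive IdState : Type
  | root (A : Fml) (Γ Δ : Multiset Fml)
  | impL (B C : Fml) (Γ Δ : Multiset Fml)
  | refl (B : Fml) (Γ Δ : Multiset Fml)

namespace IdState

def label : IdState → Sequent × RuleTag
  | root Fml.bot Γ Δ => ((Fml.bot ::ₘ Γ, Fml.bot ::ₘ Δ), RuleTag.axBot)
  | root (Fml.var n) Γ Δ => ((Fml.var n ::ₘ Γ, Fml.var n ::ₘ Δ), RuleTag.ax)
  | root (B ➝ C) Γ Δ => (((B ➝ C) ::ₘ Γ, (B ➝ C) ::ₘ Δ), RuleTag.impR)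
  | root (□B) Γ Δ => ((□B ::ₘ Γ, □B ::ₘ Δ), RuleTag.box)
  | impL B C Γ Δ => ((B ::ₘ (B ➝ C) ::ₘ Γ, C ::ₘ Δ), RuleTag.impL)
  | refl B Γ Δ => ((□B ::ₘ Γ, B ::ₘ Δ), RuleTag.refl)

def next : IdState → Bool → Option IdState
  | root (B ➝ C) Γ Δ, false => some (impL B C Γ Δ)
  | root (□B) Γ Δ, false => some (refl B Γ Δ)
  | root (□B) _ _, true => some (refl B 0 0)
  | impL B C Γ Δ, false => some (root C (B ::ₘ Γ) Δ)
  | impL B C Γ Δ, true => some (root B Γ (C ::ₘ Δ))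
  | refl B Γ Δ, false => some (root B (□B ::ₘ Γ) Δ)
  | _, _ => none

theorem label_root (A : Fml) (Γ Δ : Multiset Fml) :
    (label (root A Γ Δ)).1 = (A ::ₘ Γ, A ::ₘ Δ) := by
  cases A <;> rfl

theorem locallyCorrect : InfProof.LocallyCorrect label next false := by
  intro s
  match s with
  | root Fml.bot Γ Δ => exact Rules.axBot false Γ (Fml.bot ::ₘ Δ)
  | root (Fml.var n) Γ Δ => exact Rules.ax false Γ Δ n
  | root (B ➝ C) Γ Δ => exact Rules.impR false ((B ➝ C) ::ₘ Γ) Δ B C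
  | root (□B) Γ Δ => exact Rules.box_cons false Γ Δ B B
  | impL B C Γ Δ =>
    simp only [next, Option.map_some, Function.comp_apply, label_root]
    show Rules false (B ::ₘ (B ➝ C) ::ₘ Γ, C ::ₘ Δ) RuleTag.impL _ _
    rw [Multiset.cons_swap]
    exact Rules.impL false (B ::ₘ Γ) (C ::ₘ Δ) B C
  | refl B Γ Δ =>
    simp only [next, Option.map_some, Option.map_none, Function.comp_apply, label_root]
    exact Rules.refl false Γ (B ::ₘ Δ) B

noncomputable def rank : IdState → ℕ
  | root A _ _ => 2 * sizeOf A
  | impL B C _ _ => 2 * (sizeOf B + sizeOf C) + 1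
  | refl B _ _ => 2 * sizeOf B + 1

theorem rank_lt_of_fragmentStep {t s : IdState} (h : InfProof.FragmentStep label next t s) :
    rank t < rank s := by
  obtain ⟨i, hnext, hright⟩ := h
  rcases s with ⟨_ | _ | ⟨B, C⟩ | B, Γ, Δ⟩ | ⟨B, C, Γ, Δ⟩ | ⟨B, Γ, Δ⟩ <;> cases i <;>
    simp [next, label] at hnext hright <;> subst hnext <;> simp [rank] <;> omega

end IdState

def grzHyp (A : Fml) : Fml := □(□(A ➝ □A) ➝ A)

inductive GrzState : Type
  | refl
  | impL
  | boxImp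
  | impR (Δ : Multiset Fml)
  | boxA (Δ : Multiset Fml)
  | id (s : IdState)

namespace GrzState

variable (A : Fml)

def label : GrzState → Sequent × RuleTag
  | refl => ((grzHyp A ::ₘ 0, A ::ₘ 0), RuleTag.refl)
  | impL => (((□(A ➝ □A) ➝ A) ::ₘ grzHyp A ::ₘ 0, A ::ₘ 0), RuleTag.impL)
  | boxImp => ((grzHyp A ::ₘ 0, □(A ➝ □A) ::ₘ A ::ₘ 0), RuleTag.box)
  | impR Δ => ((grzHyp A ::ₘ 0, (A ➝ □A) ::ₘ Δ), RuleTag.impR)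
  | boxA Δ => ((A ::ₘ grzHyp A ::ₘ 0, □A ::ₘ Δ), RuleTag.box)
  | id s => s.label

def next : GrzState → Bool → Option GrzState
  | refl, false => some impL
  | impL, false => some (id (.root A (grzHyp A ::ₘ 0) 0))
  | impL, true => some boxImp
  | boxImp, false => some (impR (A ::ₘ 0))
  | boxImp, true => some (impR 0)
  | impR Δ, false => some (boxA Δ)
  | boxA Δ, false => some (id (.root A (grzHyp A ::ₘ 0) Δ))
  | boxA _, true => some refl
  | id s, i => (s.next i).map id
  | _, _ => none

theorem locallyCorrect : InfProof.LocallyCorrect (label A) (next A) false := by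
  intro s
  match s with
  | refl => exact Rules.refl false 0 (A ::ₘ 0) _
  | impL =>
    simp only [next, label, Option.map_some, Function.comp_apply, IdState.label_root]
    exact Rules.impL false (grzHyp A ::ₘ 0) (A ::ₘ 0) _ A
  | boxImp => exact Rules.box_cons false 0 (A ::ₘ 0) _ _
  | impR Δ => exact Rules.impR false (grzHyp A ::ₘ 0) Δ A (□A)
  | boxA Δ =>
    simp only [next, label, Option.map_some, Function.comp_apply, IdState.label_root]
    rw [Multiset.cons_swap]
    exact Rules.box_cons false (A ::ₘ 0) Δ _ A
  | id s => simpa [next, label, Option.map_map, Function.comp_def] using IdState.locallyCorrect s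

noncomputable def rank : GrzState → ℕ
  | id s => s.rank
  | boxA _ => 2 * sizeOf A + 1
  | impR _ => 2 * sizeOf A + 2
  | boxImp => 2 * sizeOf A + 3
  | impL => 2 * sizeOf A + 4
  | refl => 2 * sizeOf A + 5

theorem rank_lt_of_fragmentStep {t s : GrzState}
    (h : InfProof.FragmentStep (label A) (next A) t s) : rank A t < rank A s := by
  obtain ⟨i, hnext, hright⟩ := h
  cases s with
  | id s =>
    obtain ⟨t', ht', rfl⟩ := Option.map_eq_some_iff.mp hnext
    exact IdState.rank_lt_of_fragmentStep ⟨i, ht', hright⟩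
  | _ =>
    cases i <;> simp [next, label] at hnext hright <;> subst hnext <;> simp [rank, IdState.rank]

theorem wellFounded_fragmentStep : WellFounded (InfProof.FragmentStep (label A) (next A)) :=
  Subrelation.wf (rank_lt_of_fragmentStep A) (measure (rank A)).wf

end GrzState

/-- For every formula `A`, the sequent `□(□(A → □A) → A) ⇒ A` is provable
in `Grz_∞`. -/
theorem grzInf_grzAxiom (A : Fml) :
    ProvableInf false
      (({Fml.box (Fml.imp (Fml.box (Fml.imp A (Fml.box A))) A)} : Multiset Fml),
        ({A} : Multiset Fml)) :=
  ⟨InfProof.unfold (GrzState.label A) (GrzState.next A) .refl (GrzState.locallyCorrect A)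
    (GrzState.wellFounded_fragmentStep A), rfl⟩
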